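/- Let X be a Poisson point process on B(0,R) ⊂ ℝ² with intensity ρ > 0, f(x) = c/(ε+‖x‖)² with c, ε > 0, P_C > 0, and γ = √(c/P_C) ≥ ε. Then Pr(Σ_{x∈X} f(x) < P_C) ≤ e^{−πρ·min(R, γ−ε)²}. -/
import Mathlib


open Real MeasureTheory ProbabilityTheory

/-- Power outage bound for a Poisson point process of RF sources: the probability that the
aggregate harvested power `∑_{x ∈ X} c/(ε+‖x‖)²` is below the circuit power `P_C` is at most
`exp (-π ρ (min R (γ-ε))²)`, where `γ = √(c/P_C)`. -/
theorem stmt_18 {Ω : Type*} [MeasureSpace Ω] [IsProbabilityMeasure (ℙ : Measure Ω)]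
    (R ρ c ε P_C γ : ℝ) (hR : 0 < R) (hρ : 0 < ρ) (hc : 0 < c) (hε : 0 < ε)
    (hP : 0 < P_C) (hγ : γ = Real.sqrt (c / P_C)) (hγε : ε ≤ γ)
    (X : Ω → Set (EuclideanSpace ℝ (Fin 2)))
    (hfin : ∀ ω, (X ω).Finite)
    (hpois : ∀ A : Set (EuclideanSpace ℝ (Fin 2)), MeasurableSet A →
      A ⊆ Metric.closedBall 0 R → ∀ k : ℕ,
        ℙ {ω | (X ω ∩ A).ncard = k} =
          ENNReal.ofReal (Real.exp (-(ρ * (volume A).toReal)) *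
            (ρ * (volume A).toReal) ^ k / (k.factorial : ℝ))) :
    ℙ {ω | ∑ x ∈ (hfin ω).toFinset, c / (ε + ‖x‖) ^ 2 < P_C} ≤
      ENNReal.ofReal (Real.exp (-(π * ρ * (min R (γ - ε)) ^ 2))) := by
  set r : ℝ := min R (γ - ε) with hr
  have hr0 : 0 ≤ r := le_min hR.le (by linarith)
  set A : Set (EuclideanSpace ℝ (Fin 2)) := Metric.closedBall 0 r with hA
  have hsub : A ⊆ Metric.closedBall 0 R :=
    Metric.closedBall_subset_closedBall (min_le_left _ _)
  have hγ2 : γ ^ 2 = c / P_C := by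
    rw [hγ, Real.sq_sqrt (by positivity)]
  have hγpos : 0 < γ := lt_of_lt_of_le hε hγε
  -- volume of A
  have hvol : (volume A).toReal = π * r ^ 2 := by
    rw [hA, EuclideanSpace.volume_closedBall]
    simp only [Fintype.card_fin]
    rw [show ((2:ℕ)/2 + 1 : ℝ) = 2 by norm_num, Real.Gamma_two]
    rw [← ENNReal.ofReal_pow hr0, ← ENNReal.ofReal_mul (by positivity)]
    rw [ENNReal.toReal_ofReal (by positivity)]
    rw [Real.sq_sqrt Real.pi_nonneg]
    ring
  -- the event is contained in the void event
  have hincl : {ω | ∑ x ∈ (hfin ω).toFinset, c / (ε + ‖x‖) ^ 2 < P_C} ⊆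
      {ω | (X ω ∩ A).ncard = 0} := by
    intro ω hω
    simp only [Set.mem_setOf_eq] at hω ⊢
    have hempty : X ω ∩ A = ∅ := by
      by_contra h
      obtain ⟨x, hxX, hxA⟩ := Set.nonempty_iff_ne_empty.mpr h
      have hxn : ‖x‖ ≤ r := by
        simpa [EuclideanSpace.norm_eq] using Metric.mem_closedBall.mp hxA
      have hxγ : ε + ‖x‖ ≤ γ := by
        have : r ≤ γ - ε := min_le_right _ _
        linarith
      have hterm : P_C ≤ c / (ε + ‖x‖) ^ 2 := by
        have h1 : 0 < ε + ‖x‖ := by positivity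
        have h2 : (ε + ‖x‖) ^ 2 ≤ γ ^ 2 := by
          apply pow_le_pow_left₀ h1.le hxγ
        have h3 : c / γ ^ 2 ≤ c / (ε + ‖x‖) ^ 2 :=
          div_le_div_of_nonneg_left hc.le (by positivity) h2
        have h4 : c / γ ^ 2 = P_C := by
          rw [hγ2]; field_simp
        linarith
      have hsum : c / (ε + ‖x‖) ^ 2 ≤ ∑ y ∈ (hfin ω).toFinset, c / (ε + ‖y‖) ^ 2 := by
        apply Finset.single_le_sum (f := fun y => c / (ε + ‖y‖) ^ 2)
        · intro y _; positivity
        · exact (hfin ω).mem_toFinset.mpr hxX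
      linarith
    simp [hempty]
  calc ℙ {ω | ∑ x ∈ (hfin ω).toFinset, c / (ε + ‖x‖) ^ 2 < P_C}
      ≤ ℙ {ω | (X ω ∩ A).ncard = 0} := measure_mono hincl
    _ = ENNReal.ofReal (Real.exp (-(ρ * (volume A).toReal)) *
          (ρ * (volume A).toReal) ^ 0 / (Nat.factorial 0 : ℝ)) :=
        hpois A Metric.isClosed_closedBall.measurableSet hsub 0
    _ = ENNReal.ofReal (Real.exp (-(π * ρ * r ^ 2))) := by
        rw [hvol]; norm_num; ring_nf
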